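/- arXiv:1503.00883 — 6 statements merged into one kernel-verified Lean document; each statement's English description precedes it below -/
import Mathlib

section
/- Let D be a partial order with narrowing operator △ (b ⊑ a implies b ⊑ a △ b ⊑ a). Suppose all right-hand sides f_x : (X → D) → D of a system of equations are monotone (with respect to the pointwise order on X → D), and ρ₀ is a post-solution, i.e., f_x ρ₀ ⊑ ρ₀ x for all x. Then any chaotic iteration sequence ρ₀, ρ₁, ... in which each step updates a single unknown x by ρ_{i+1} x = ρ_i x △ f_x ρ_i (leaving other unknowns unchanged) is pointwise decreasing (ρ_{i+1} ⊑ ρ_i for all i), and moreover every ρ_i in the sequence is again a post-solution. -/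
/-!
A narrowing step at `x` from a post-solution `ρ` only lowers `ρ x`, and keeps it above `f x ρ`.
Since the right-hand sides are monotone they can only decrease, so the new map is again a
post-solution; induction along the iteration gives both claims.
-/

section Narrowing

variable {D X : Type*}

def IsPostSolution [LE D] (f : X → (X → D) → D) (ρ : X → D) : Prop :=
  ∀ x, f x ρ ≤ ρ x

def narrowAt [DecidableEq X] (nar : D → D → D) (f : X → (X → D) → D) (ρ : X → D) (x : X) : X → D :=
  Function.update ρ x (nar (ρ x) (f x ρ))

variable [DecidableEq X] {nar : D → D → D} {f : X → (X → D) → D} {ρ : X → D}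

theorem eq_narrowAt_of_update {ρ' : X → D} {x : X}
    (hx : ρ' x = nar (ρ x) (f x ρ)) (hy : ∀ y, y ≠ x → ρ' y = ρ y) :
    ρ' = narrowAt nar f ρ x := by
  funext y
  rcases eq_or_ne y x with rfl | hyx
  · simp [narrowAt, hx]
  · simp [narrowAt, hyx, hy y hyx]

variable [Preorder D]

theorem narrowAt_le (hn : ∀ a b : D, b ≤ a → nar a b ≤ a) (hρ : IsPostSolution f ρ) (x : X) :
    narrowAt nar f ρ x ≤ ρ := by
  intro y
  rcases eq_or_ne y x with rfl | hyx
  · simpa [narrowAt] using hn _ _ (hρ y)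
  · simp [narrowAt, hyx]

theorem isPostSolution_narrowAt (hn : ∀ a b : D, b ≤ a → b ≤ nar a b ∧ nar a b ≤ a)
    (hmono : ∀ x, Monotone (f x)) (hρ : IsPostSolution f ρ) (x : X) :
    IsPostSolution f (narrowAt nar f ρ x) := by
  intro y
  have hfy : f y (narrowAt nar f ρ x) ≤ f y ρ :=
    hmono y (narrowAt_le (fun a b h => (hn a b h).2) hρ x)
  rcases eq_or_ne y x with rfl | hyx
  · simpa [narrowAt] using hfy.trans (hn _ _ (hρ y)).1
  · simpa [narrowAt, hyx] using hfy.trans (hρ y)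

end Narrowing

theorem stmt1 {D X : Type*} [PartialOrder D]
    (nar : D → D → D)
    (hn : ∀ a b : D, b ≤ a → b ≤ nar a b ∧ nar a b ≤ a)
    (f : X → (X → D) → D)
    (hmono : ∀ x, Monotone (f x))
    (ρ : ℕ → X → D)
    (hpost : ∀ x, f x (ρ 0) ≤ ρ 0 x)
    (hstep : ∀ i, ∃ x, ρ (i+1) x = nar (ρ i x) (f x (ρ i)) ∧
      ∀ y, y ≠ x → ρ (i+1) y = ρ i y) :
    ∀ i, (∀ y, ρ (i+1) y ≤ ρ i y) ∧ (∀ x, f x (ρ i) ≤ ρ i x) := by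
  classical
  have hnext : ∀ i, ∃ x, ρ (i+1) = narrowAt nar f (ρ i) x := fun i =>
    let ⟨x, hx, hy⟩ := hstep i
    ⟨x, eq_narrowAt_of_update hx hy⟩
  have hpost_all : ∀ i, IsPostSolution f (ρ i) := by
    intro i
    induction i with
    | zero => exact hpost
    | succ i ih =>
      obtain ⟨x, hx⟩ := hnext i
      rw [hx]
      exact isPostSolution_narrowAt hn hmono ih x
  intro i
  obtain ⟨x, hx⟩ := hnext i
  refine ⟨?_, hpost_all i⟩
  rw [hx]
  exact narrowAt_le (fun a b h => (hn a b h).2) (hpost_all i) x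
end

section
/- Let D = ℕ ∪ {∞} with the natural order. Define the widening a ▽ b = a if a = b and a ▽ b = ∞ otherwise, and the narrowing (for b ≤ a) a △ b = b if a = ∞ and a △ b = a otherwise. Let ⊟ be the combined operator (a ⊟ b = a △ b if b ≤ a, else a ▽ b). Consider the monotone system x₁ = x₂, x₂ = x₃ + 1, x₃ = x₁ (where ∞ + 1 = ∞). Then round-robin iteration with ⊟ in the order x₁, x₂, x₃ starting from the all-zero assignment does not terminate: for every n ≥ 1, after n full rounds the assignment differs from the assignment after round n+1. -/
open Classical

/-- Widening on ℕ∞: a ▽ b = a if a = b, ∞ otherwise. -/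
noncomputable def w3 (a b : ℕ∞) : ℕ∞ := if a = b then a else ⊤
/-- Narrowing on ℕ∞ (for b ≤ a): a △ b = b if a = ∞, a otherwise. -/
noncomputable def n3 (a b : ℕ∞) : ℕ∞ := if a = ⊤ then b else a
/-- Combined operator. -/
noncomputable def box3 (a b : ℕ∞) : ℕ∞ := if b ≤ a then n3 a b else w3 a b

/-- One full round of round-robin iteration on the system
x₁ = x₂, x₂ = x₃ + 1, x₃ = x₁, updating in order x₁, x₂, x₃. -/
noncomputable def round3 (p : ℕ∞ × ℕ∞ × ℕ∞) : ℕ∞ × ℕ∞ × ℕ∞ :=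
  let a := box3 p.1 p.2.1
  let b := box3 p.2.1 (p.2.2 + 1)
  let c := box3 p.2.2 a
  (a, b, c)

/-! After the first round the iterates alternate between `(k, ∞, k)` and `(∞, k + 1, ∞)`:
every finite value is widened to `∞` as soon as its right-hand side grows, and every `∞` is
narrowed back to the finite value of its right-hand side. Hence the first component is `∞`
exactly after the even rounds, so no two consecutive rounds agree. -/

lemma box3_self (a : ℕ∞) : box3 a a = a := by
  simp [box3, n3]

lemma box3_top_left (b : ℕ∞) : box3 ⊤ b = b := by
  simp [box3, n3]

lemma box3_of_lt {a b : ℕ∞} (h : a < b) : box3 a b = ⊤ := by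
  simp [box3, w3, h.not_ge, h.ne]

lemma round3_zero : round3 (0, 0, 0) = (0, ⊤, 0) := by
  simp [round3, box3_self, box3_of_lt]

lemma round3_coe_top_coe (k : ℕ) : round3 ((k : ℕ∞), ⊤, (k : ℕ∞)) = (⊤, ↑(k + 1), ⊤) := by
  simp [round3, box3_of_lt, box3_top_left]

lemma round3_top_coe_top (k : ℕ) : round3 (⊤, (k : ℕ∞), ⊤) = ((k : ℕ∞), ⊤, (k : ℕ∞)) := by
  simp [round3, box3_top_left, box3_of_lt]

lemma round3_iterate_odd (k : ℕ) : round3^[2 * k + 1] (0, 0, 0) = ((k : ℕ∞), ⊤, (k : ℕ∞)) := by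
  induction k with
  | zero => simpa using round3_zero
  | succ k ih =>
    rw [show 2 * (k + 1) + 1 = 2 * k + 1 + 1 + 1 by ring, Function.iterate_succ_apply',
      Function.iterate_succ_apply', ih, round3_coe_top_coe, round3_top_coe_top]

lemma round3_iterate_even (k : ℕ) : round3^[2 * k + 2] (0, 0, 0) = (⊤, ↑(k + 1), ⊤) := by
  rw [Function.iterate_succ_apply', round3_iterate_odd, round3_coe_top_coe]

lemma fst_round3_iterate_eq_top_iff {n : ℕ} (hn : 1 ≤ n) :
    (round3^[n] (0, 0, 0)).1 = ⊤ ↔ Even n := by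
  obtain ⟨k, rfl | rfl⟩ : ∃ k, n = 2 * k + 1 ∨ n = 2 * k + 2 :=
    ⟨(n - 1) / 2, by omega⟩
  · rw [round3_iterate_odd]
    simp [Nat.not_even_bit1]
  · rw [round3_iterate_even]
    simp [show Even (2 * k + 2) from ⟨k + 1, by ring⟩]

theorem stmt3 : ∀ n : ℕ, 1 ≤ n →
    round3^[n] ((0 : ℕ∞), (0 : ℕ∞), (0 : ℕ∞)) ≠
    round3^[n+1] ((0 : ℕ∞), (0 : ℕ∞), (0 : ℕ∞)) := by
  intro n hn h
  have hparity : Even n ↔ Even (n + 1) := by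
    rw [← fst_round3_iterate_eq_top_iff hn, ← fst_round3_iterate_eq_top_iff (by omega), h]
  exact iff_not_self (hparity.trans Nat.even_add_one)
end

section
/- Let D = ℕ ∪ {∞} and let f : D → D be defined by f(x) = 1 if x = 0 and f(x) = 0 otherwise (a non-monotone function). With the widening a ▽ b = ∞ whenever a < b (and a ▽ b = a if b ≤ a), the narrowing a △ b = b if a = ∞ and a △ b = a otherwise, and the combined operator ⊟ (narrowing when the new value is ≤, widening otherwise), the iteration x₀ = 0, x_{i+1} = x_i ⊟ f(x_i) satisfies x_{2k} = 0 and x_{2k+1} = ∞ for all k, and hence never becomes stationary. -/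
open Classical

/-- The non-monotone right-hand side: f(x) = 1 if x = 0, else 0. -/
noncomputable def f4 (x : ℕ∞) : ℕ∞ := if x = 0 then 1 else 0
/-- Widening: a ▽ b = ∞ if a < b, else a. -/
noncomputable def w4 (a b : ℕ∞) : ℕ∞ := if a < b then ⊤ else a
/-- Narrowing: a △ b = b if a = ∞, else a. -/
noncomputable def n4 (a b : ℕ∞) : ℕ∞ := if a = ⊤ then b else a
/-- Combined operator. -/
noncomputable def box4 (a b : ℕ∞) : ℕ∞ := if b ≤ a then n4 a b else w4 a b

/-- The iteration x₀ = 0, x_{i+1} = x_i ⊟ f(x_i). -/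
noncomputable def x4 : ℕ → ℕ∞
  | 0 => 0
  | i+1 => box4 (x4 i) (f4 (x4 i))

/-! At `0` the right-hand side jumps up to `1`, which is widened to `∞`; at `∞` it drops to `0`,
which narrowing accepts since `∞` is the only value narrowing may improve. -/

lemma box4_zero_f4_zero : box4 0 (f4 0) = ⊤ := by
  simp [box4, f4, w4]

lemma box4_top_f4_top : box4 ⊤ (f4 ⊤) = 0 := by
  simp [box4, f4, n4]

lemma x4_succ (i : ℕ) : x4 (i + 1) = box4 (x4 i) (f4 (x4 i)) := rfl

lemma x4_two_mul (k : ℕ) : x4 (2 * k) = 0 ∧ x4 (2 * k + 1) = ⊤ := by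
  induction k with
  | zero => exact ⟨rfl, by rw [x4_succ, mul_zero, show x4 0 = 0 from rfl, box4_zero_f4_zero]⟩
  | succ k ih =>
    have h_even : x4 (2 * (k + 1)) = 0 := by
      rw [show 2 * (k + 1) = 2 * k + 1 + 1 by ring, x4_succ, ih.2, box4_top_f4_top]
    exact ⟨h_even, by rw [x4_succ, h_even, box4_zero_f4_zero]⟩

theorem stmt4 : (∀ k, x4 (2*k) = 0 ∧ x4 (2*k+1) = ⊤) ∧ (∀ i, x4 (i+1) ≠ x4 i) := by
  refine ⟨x4_two_mul, fun i => ?_⟩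
  obtain ⟨k, rfl | rfl⟩ := Nat.even_or_odd' i
  · rw [(x4_two_mul k).1, (x4_two_mul k).2]
    exact ENat.top_ne_zero
  · rw [(x4_two_mul k).2, show 2 * k + 1 + 1 = 2 * (k + 1) by ring, (x4_two_mul (k + 1)).1]
    exact ENat.top_ne_zero.symm
end

section
/- Let D be a poset of height h (the maximal length of a strictly increasing chain d₀ ⊏ d₁ ⊏ ... ⊏ d_h is h) and consider a system of n monotone equations over D. Then structured round-robin iteration (the recursive algorithm solve(i): if i = 0 return; solve(i−1); update x_i with the join operator ⊔; if the value changed, repeat solve(i)), started by solve(n) from any initial assignment, terminates after at most n + (h/2)·n·(n+1) evaluations of right-hand sides. -/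
/- Structured round-robin iteration `solve` with fuel, counting the number of
evaluations of right-hand sides.  `srr box f fuel i ρ` is `solve i` started
from assignment `ρ`; it returns the resulting assignment together with the
number of evaluations performed, or `none` if fuel ran out. -/
open Classical in
noncomputable def srr {D : Type*} (box : D → D → D) (f : ℕ → (ℕ → D) → D) :
    ℕ → ℕ → (ℕ → D) → Option ((ℕ → D) × ℕ)
  | 0, _, _ => none
  | _fuel+1, 0, ρ => some (ρ, 0)
  | fuel+1, i+1, ρ =>
    match srr box f fuel i ρ with
    | none => none
    | some (ρ₁, c₁) =>
      let newv := box (ρ₁ i) (f i ρ₁)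
      if newv = ρ₁ i then some (ρ₁, c₁ + 1)
      else
        match srr box f fuel (i+1) (Function.update ρ₁ i newv) with
        | none => none
        | some (ρ₂, c₂) => some (ρ₂, c₁ + 1 + c₂)

/-!
Every value has coheight at most `h`, and an unknown `xᵢ` is only ever joined with new
information, so each change of `xᵢ` strictly lowers the coheight of its value. Weight the
coheight of `xⱼ` by `j + 1` and sum over `j < i`: this potential bounds the work of `solve i`.
Indeed `solve (i+1)` costs one evaluation plus the work of `solve i`, and when `xᵢ` changes it
restarts; but then the coheight of `xᵢ` has dropped by one, releasing `i + 1` units of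
potential, exactly the restart's own allowance. Hence `solve n` performs at most
`n + ∑_{j<n} (j+1)·h = n + h·n(n+1)/2` evaluations.
-/

open Order Finset

section Coheight

variable {D : Type*} [Preorder D]

lemma coheight_le_of_forall_not_strictChain {h : ℕ}
    (hheight : ∀ d : ℕ → D, ¬ ∀ i, i ≤ h → d i < d (i + 1)) (a : D) : coheight a ≤ h := by
  refine coheight_le fun p _ => ?_
  by_contra! hlen
  norm_cast at hlen
  exact hheight (fun i => p ⟨min i p.length, by omega⟩) fun i hi =>
    p.strictMono (by rw [Fin.mk_lt_mk]; omega)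

lemma toNat_coheight_lt_of_lt {a b : D} (hab : a < b) (ha : coheight a ≠ ⊤) :
    (coheight b).toNat < (coheight a).toNat := by
  have hba := coheight_add_one_le hab
  lift coheight a to ℕ using ha with m
  lift coheight b to ℕ using ne_top_of_le_ne_top (ENat.natCast_ne_top m) (le_trans le_self_add hba)
    with k
  norm_cast at hba ⊢

noncomputable def srrPotential (i : ℕ) (ρ : ℕ → D) : ℕ :=
  ∑ j ∈ range i, (j + 1) * (coheight (ρ j)).toNat

lemma srrPotential_succ (i : ℕ) (ρ : ℕ → D) :
    srrPotential (i + 1) ρ = srrPotential i ρ + (i + 1) * (coheight (ρ i)).toNat :=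
  sum_range_succ _ _

lemma srrPotential_update_self (i : ℕ) (ρ : ℕ → D) (v : D) :
    srrPotential i (Function.update ρ i v) = srrPotential i ρ :=
  sum_congr rfl fun j hj => by rw [Function.update_of_ne (mem_range.1 hj).ne]

lemma two_mul_srrPotential_le {h : ℕ} (hD : ∀ d : D, coheight d ≤ h) (n : ℕ) (ρ : ℕ → D) :
    2 * srrPotential n ρ ≤ h * n * (n + 1) := by
  have hgauss : (∑ j ∈ range n, (j + 1)) * 2 = (n + 1) * n := by
    have := sum_range_id_mul_two (n + 1)
    rw [sum_range_succ'] at this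
    simpa using this
  calc 2 * srrPotential n ρ ≤ 2 * ∑ j ∈ range n, (j + 1) * h := by
        unfold srrPotential
        gcongr with j
        exact ENat.toNat_le_of_le_natCast (hD _)
    _ = h * n * (n + 1) := by rw [← sum_mul, ← mul_assoc, mul_comm 2, hgauss]; ring

end Coheight

section Srr

variable {D : Type*} (box : D → D → D) (f : ℕ → (ℕ → D) → D)

lemma srr_mono_fuel {fuel fuel' i : ℕ} {ρ : ℕ → D} {r : (ℕ → D) × ℕ}
    (hr : srr box f fuel i ρ = some r) (hle : fuel ≤ fuel') : srr box f fuel' i ρ = some r := by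
  induction fuel generalizing fuel' i ρ r with
  | zero => simp [srr] at hr
  | succ fuel ih =>
    obtain ⟨fuel', rfl⟩ : ∃ k, fuel' = k + 1 := ⟨fuel' - 1, by omega⟩
    cases i with
    | zero => simpa [srr] using hr
    | succ i =>
      rw [srr] at hr ⊢
      cases h₁ : srr box f fuel i ρ with
      | none => simp [h₁] at hr
      | some p =>
        rw [h₁] at hr
        rw [ih h₁ (by omega)]
        by_cases hc : box (p.1 i) (f i p.1) = p.1 i
        · simpa [hc] using hr
        · simp only [if_neg hc] at hr ⊢
          cases h₂ : srr box f fuel (i + 1) (Function.update p.1 i (box (p.1 i) (f i p.1))) with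
          | none => simp [h₂] at hr
          | some q => rw [h₂] at hr; rwa [ih h₂ (by omega)]

lemma srr_succ_of_eq {fuel i c₁ : ℕ} {ρ ρ₁ : ℕ → D} (h₁ : srr box f fuel i ρ = some (ρ₁, c₁))
    (heq : box (ρ₁ i) (f i ρ₁) = ρ₁ i) : srr box f (fuel + 1) (i + 1) ρ = some (ρ₁, c₁ + 1) := by
  simp [srr, h₁, heq]

lemma srr_succ_of_ne {fuel₁ fuel₂ i c₁ c₂ : ℕ} {ρ ρ₁ ρ₂ : ℕ → D}
    (h₁ : srr box f fuel₁ i ρ = some (ρ₁, c₁)) (hne : box (ρ₁ i) (f i ρ₁) ≠ ρ₁ i)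
    (h₂ : srr box f fuel₂ (i + 1) (Function.update ρ₁ i (box (ρ₁ i) (f i ρ₁))) = some (ρ₂, c₂)) :
    srr box f (max fuel₁ fuel₂ + 1) (i + 1) ρ = some (ρ₂, c₁ + 1 + c₂) := by
  rw [srr, srr_mono_fuel box f h₁ (le_max_left _ _)]
  simp only [if_neg hne]
  rw [srr_mono_fuel box f h₂ (le_max_right _ _)]

end Srr

theorem exists_srr_add_srrPotential_le {D : Type*} [SemilatticeSup D]
    (f : ℕ → (ℕ → D) → D) (hfin : ∀ d : D, coheight d ≠ ⊤) (i : ℕ) (ρ : ℕ → D) :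
    ∃ fuel ρ' c, srr (· ⊔ ·) f fuel i ρ = some (ρ', c) ∧ (∀ j, i ≤ j → ρ' j = ρ j) ∧
      c + srrPotential i ρ' ≤ i + srrPotential i ρ := by
  induction i generalizing ρ with
  | zero => exact ⟨1, ρ, 0, rfl, fun _ _ => rfl, le_rfl⟩
  | succ i ih =>
    induction hk : (coheight (ρ i)).toNat using Nat.strong_induction_on generalizing ρ with
    | _ k ihk =>
      obtain ⟨fuel₁, ρ₁, c₁, h₁, hframe₁, hpot₁⟩ := ih ρ
      have hρ₁i : ρ₁ i = ρ i := hframe₁ i le_rfl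
      by_cases heq : ρ₁ i ⊔ f i ρ₁ = ρ₁ i
      · refine ⟨fuel₁ + 1, ρ₁, c₁ + 1, srr_succ_of_eq _ f h₁ heq,
          fun j hj => hframe₁ j (by omega), ?_⟩
        rw [srrPotential_succ, srrPotential_succ, hρ₁i]
        omega
      · set v := ρ₁ i ⊔ f i ρ₁
        have hdrop : (coheight v).toNat < k := by
          rw [← hk, ← hρ₁i]
          exact toNat_coheight_lt_of_lt (lt_of_le_of_ne le_sup_left (Ne.symm heq)) (hfin _)
        obtain ⟨fuel₂, ρ₂, c₂, h₂, hframe₂, hpot₂⟩ :=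
          ihk _ hdrop (Function.update ρ₁ i v) (by rw [Function.update_self])
        refine ⟨max fuel₁ fuel₂ + 1, ρ₂, c₁ + 1 + c₂, srr_succ_of_ne _ f h₁ heq h₂,
          fun j hj => ?_, ?_⟩
        · rw [hframe₂ j hj, Function.update_of_ne (by omega), hframe₁ j (by omega)]
        · rw [srrPotential_succ i (Function.update ρ₁ i v), srrPotential_update_self,
            Function.update_self] at hpot₂
          rw [srrPotential_succ i ρ, hk]
          have : (i + 1) * (coheight v).toNat + (i + 1) ≤ (i + 1) * k := by
            rw [← Nat.mul_succ]; exact Nat.mul_le_mul_left _ hdrop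
          omega

theorem stmt5_general {D : Type*} [SemilatticeSup D] (h n : ℕ)
    (hheight : ∀ d : ℕ → D, ¬ (∀ i, i ≤ h → d i < d (i+1)))
    (f : ℕ → (ℕ → D) → D) (ρ0 : ℕ → D) :
    ∃ fuel ρ' c, srr (· ⊔ ·) f fuel n ρ0 = some (ρ', c) ∧
      2 * c ≤ 2 * n + h * n * (n + 1) := by
  have hD := coheight_le_of_forall_not_strictChain hheight
  obtain ⟨fuel, ρ', c, hrun, -, hpot⟩ := exists_srr_add_srrPotential_le f
    (fun d => ne_top_of_le_ne_top (ENat.natCast_ne_top h) (hD d)) n ρ0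
  have := two_mul_srrPotential_le hD n ρ0
  exact ⟨fuel, ρ', c, hrun, by omega⟩

/-- SRR with the join operator over a poset of height h terminates within
n + (h/2)·n·(n+1) evaluations (stated multiplied by 2 to stay in ℕ). -/
theorem stmt5 {D : Type*} [SemilatticeSup D] (h n : ℕ)
    (hheight : ∀ d : ℕ → D, ¬ (∀ i, i ≤ h → d i < d (i+1)))
    (f : ℕ → (ℕ → D) → D) (hmono : ∀ i, Monotone (f i)) (ρ0 : ℕ → D) :
    ∃ fuel ρ' c, srr (· ⊔ ·) f fuel n ρ0 = some (ρ', c) ∧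
      2 * c ≤ 2 * n + h * n * (n + 1) :=
  stmt5_general h n hheight f ρ0
end

section
/- Let ⊟ be defined by a ⊟ b = a △ b when b ⊑ a and a ⊟ b = a ▽ b otherwise, where △ is an idempotent narrowing ((a △ b) △ b = a △ b whenever defined); then (a ⊟ b) ⊟ b = (a ⊟ b) △ b and consequently ((a ⊟ b) ⊟ b) ⊟ b = (a ⊟ b) ⊟ b for all a, b with the relevant narrowing applications defined. -/
open Classical in
noncomputable def combine {D : Type*} [Preorder D] (w nar : D → D → D) (a b : D) : D :=
  if b ≤ a then nar a b else w a b

lemma combine_of_le {D : Type*} [Preorder D] (w nar : D → D → D) {a b : D} (h : b ≤ a) :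
    combine w nar a b = nar a b := by
  unfold combine; rw [if_pos h]

theorem stmt6 {D : Type*} [PartialOrder D]
    (w nar : D → D → D)
    (hw1 : ∀ a b, a ≤ w a b) (hw2 : ∀ a b, b ≤ w a b)
    (hn : ∀ a b, b ≤ a → b ≤ nar a b ∧ nar a b ≤ a)
    (hidem : ∀ a b, b ≤ a → nar (nar a b) b = nar a b) :
    ∀ a b : D,
      combine w nar (combine w nar a b) b = nar (combine w nar a b) b ∧
      combine w nar (combine w nar (combine w nar a b) b) b =
        combine w nar (combine w nar a b) b := by
  intro a b
  have hle : b ≤ combine w nar a b := by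
    unfold combine
    split
    · exact (hn a b ‹_›).1
    · exact hw2 a b
  have h1 : combine w nar (combine w nar a b) b = nar (combine w nar a b) b :=
    combine_of_le w nar hle
  refine ⟨h1, ?_⟩
  rw [h1, combine_of_le w nar (hn _ _ hle).1]
  exact hidem _ _ hle
end

section
/- Let D be a directed set with a least element ⊥ and consider a single-unknown monotone function f : D → D together with widening ▽ and narrowing △ satisfying the standard chain conditions. Define the sequence: u₀ = ⊥, u_{i+1} = u_i ▽ f(u_i) until some index m with f(u_m) ⊑ u_m; then v₀ = u_m, v_{j+1} = v_j △ f(v_j). Then: (1) the ascending phase reaches such an m; (2) every v_j satisfies f(v_j) ⊑ v_j (each v_j is a post-fixpoint); (3) the descending phase is eventually stationary, and its limit v is a post-fixpoint of f with v ⊑ u_m. -/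
/-!
Since `b ≤ a ▽ b`, a stationary point `u N = u (N+1) = u N ▽ f (u N)` of the widening
sequence is a post-fixpoint, and the widening chain condition provides one. Narrowing a
post-fixpoint `a` by `f a` lands between `f a` and `a`, so by monotonicity of `f` it is again a
post-fixpoint; hence the descending sequence stays below its start, consists of post-fixpoints,
and the narrowing chain condition makes it stationary.
-/

section Widening

variable {D : Type*} [Preorder D] {w : D → D → D} {f : D → D} {u : ℕ → D}

theorem postfixpoint_of_widening_succ_eq (hw : ∀ a b, b ≤ w a b)
    (hu : ∀ i, u (i + 1) = w (u i) (f (u i))) {N : ℕ} (hN : u (N + 1) = u N) :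
    f (u N) ≤ u N :=
  calc f (u N) ≤ w (u N) (f (u N)) := hw _ _
    _ = u N := (hu N).symm.trans hN

end Widening

section Narrowing

variable {D : Type*} [Preorder D] {nar : D → D → D} {f : D → D} {v : ℕ → D}

theorem narrowing_step_postfixpoint (hn : ∀ a b, b ≤ a → b ≤ nar a b ∧ nar a b ≤ a)
    (hf : Monotone f) {a : D} (ha : f a ≤ a) :
    nar a (f a) ≤ a ∧ f (nar a (f a)) ≤ nar a (f a) :=
  have ⟨hlow, hle⟩ := hn a (f a) ha
  ⟨hle, (hf hle).trans hlow⟩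

variable (hn : ∀ a b, b ≤ a → b ≤ nar a b ∧ nar a b ≤ a) (hf : Monotone f)
  (hv : ∀ j, v (j + 1) = nar (v j) (f (v j))) (h0 : f (v 0) ≤ v 0)
include hn hf hv h0

theorem narrowing_seq_postfixpoint (j : ℕ) : f (v j) ≤ v j := by
  induction j with
  | zero => exact h0
  | succ k ih => rw [hv k]; exact (narrowing_step_postfixpoint hn hf ih).2

theorem narrowing_seq_antitone : Antitone v :=
  antitone_nat_of_succ_le fun j => by
    rw [hv j]
    exact (narrowing_step_postfixpoint hn hf (narrowing_seq_postfixpoint hn hf hv h0 j)).1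

end Narrowing

theorem stmt13_general {D : Type*} [PartialOrder D]
    (w nar : D → D → D)
    (hw2 : ∀ a b, b ≤ w a b)
    (hn : ∀ a b, b ≤ a → b ≤ nar a b ∧ nar a b ≤ a)
    (hwterm : ∀ d b : ℕ → D, (∀ i, d (i+1) = w (d i) (b i)) →
      ∃ N, ∀ m, N ≤ m → d m = d N)
    (hnterm : ∀ d b : ℕ → D, (∀ i, b i ≤ d i ∧ d (i+1) = nar (d i) (b i)) →
      ∃ N, ∀ m, N ≤ m → d m = d N)
    (f : D → D) (hf : Monotone f)
    (u : ℕ → D) (hu : ∀ i, u (i+1) = w (u i) (f (u i))) :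
    ∃ m, f (u m) ≤ u m ∧
      ∀ v : ℕ → D, v 0 = u m → (∀ j, v (j+1) = nar (v j) (f (v j))) →
        (∀ j, f (v j) ≤ v j) ∧
        ∃ J, (∀ j, J ≤ j → v j = v J) ∧ v J ≤ u m ∧ f (v J) ≤ v J := by
  obtain ⟨N, hN⟩ := hwterm u (fun i => f (u i)) hu
  have hfix : f (u N) ≤ u N :=
    postfixpoint_of_widening_succ_eq hw2 hu (hN (N + 1) N.le_succ)
  refine ⟨N, hfix, fun v hv0 hv => ?_⟩
  have h0 : f (v 0) ≤ v 0 := hv0 ▸ hfix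
  have hpost := narrowing_seq_postfixpoint hn hf hv h0
  obtain ⟨J, hJ⟩ := hnterm v (fun j => f (v j)) fun j => ⟨hpost j, hv j⟩
  exact ⟨hpost, J, hJ, hv0 ▸ narrowing_seq_antitone hn hf hv h0 J.zero_le, hpost J⟩

theorem stmt13 {D : Type*} [PartialOrder D] [OrderBot D]
    (hdir : ∀ a b : D, ∃ c, a ≤ c ∧ b ≤ c)
    (w nar : D → D → D)
    (hw1 : ∀ a b, a ≤ w a b) (hw2 : ∀ a b, b ≤ w a b)
    (hn : ∀ a b, b ≤ a → b ≤ nar a b ∧ nar a b ≤ a)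
    (hwterm : ∀ d b : ℕ → D, (∀ i, d (i+1) = w (d i) (b i)) →
      ∃ N, ∀ m, N ≤ m → d m = d N)
    (hnterm : ∀ d b : ℕ → D, (∀ i, b i ≤ d i ∧ d (i+1) = nar (d i) (b i)) →
      ∃ N, ∀ m, N ≤ m → d m = d N)
    (f : D → D) (hf : Monotone f)
    (u : ℕ → D) (hu0 : u 0 = ⊥) (hu : ∀ i, u (i+1) = w (u i) (f (u i))) :
    ∃ m, f (u m) ≤ u m ∧
      ∀ v : ℕ → D, v 0 = u m → (∀ j, v (j+1) = nar (v j) (f (v j))) →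
        (∀ j, f (v j) ≤ v j) ∧
        ∃ J, (∀ j, J ≤ j → v j = v J) ∧ v J ≤ u m ∧ f (v J) ≤ v J :=
  stmt13_general w nar hw2 hn hwterm hnterm f hf u hu
end
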